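/- arXiv:1611.02365 — 7 statements merged into one kernel-verified Lean document; each statement's English description precedes it below -/
import Mathlib

section
/- Let q ≥ 1 and β_1, …, β_q ∈ ℝ, and let F be the companion matrix of (β_1, …, β_q). Suppose F = T · Λ · T⁻¹ where T is an invertible q×q real matrix and Λ is a q×q real diagonal matrix whose diagonal entries all have absolute value at most λ for some λ ≥ 0; set κ = ‖T‖₂ · ‖T⁻¹‖₂. Suppose y : ℤ → ℝ satisfies y_t = −∑_{i=1}^q β_i · y_{t−i} for every integer t ≥ 1, and suppose c ≥ 0 is such that |y_{−i}| ≤ c for every i = 0, 1, …, q−1. Then for every integer m ≥ 0, |y_m| ≤ κ · λ^m · c · √q. -/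
/-- The companion matrix of coefficients `β 0, …, β (q-1)` (representing β_1, …, β_q):
first row is `(-β_1, …, -β_q)`, subdiagonal entries equal `1`, all other entries `0`. -/
def companionMatrix {q : ℕ} (β : Fin q → ℝ) : Matrix (Fin q) (Fin q) ℝ :=
  fun i j =>
    if (i : ℕ) = 0 then -β j
    else if (i : ℕ) = (j : ℕ) + 1 then 1
    else 0

/-- The operator norm of a square real matrix induced by the Euclidean norm
(i.e. its largest singular value). -/
noncomputable def matrixOpNorm {q : ℕ} (A : Matrix (Fin q) (Fin q) ℝ) : ℝ :=
  ‖Matrix.toEuclideanCLM (𝕜 := ℝ) A‖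

/-!
The delay vector `(y_t, y_{t-1}, …, y_{t-q+1})` is mapped by the companion matrix `F` to the next
one, so it equals `F^m` applied to the initial delay vector, whose Euclidean norm is at most
`c √q`. Since `F^m = T Λ^m T⁻¹`, the operator norm of `F^m` is at most `‖T‖ λ^m ‖T⁻¹‖ = κ λ^m`,
and `|y_m|` is bounded by the norm of its delay vector.
-/

open Matrix
open scoped Matrix.Norms.L2Operator

lemma norm_units_conj_pow_le {R : Type*} [SeminormedRing R] (u : Rˣ) (x : R) (n : ℕ) :
    ‖((u : R) * x * ↑u⁻¹) ^ n‖ ≤ ‖(u : R)‖ * ‖x ^ n‖ * ‖(↑u⁻¹ : R)‖ := by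
  rw [Units.conj_pow]
  exact (norm_mul_le _ _).trans (mul_le_mul_of_nonneg_right (norm_mul_le _ _) (norm_nonneg _))

lemma Matrix.l2_opNorm_diagonal_pow_le {ι : Type*} [Fintype ι] [DecidableEq ι] {d : ι → ℝ}
    {r : ℝ} (hr : 0 ≤ r) (hd : ∀ i, |d i| ≤ r) (n : ℕ) :
    ‖diagonal d ^ n‖ ≤ r ^ n := by
  rw [diagonal_pow, l2_opNorm_diagonal, pi_norm_le_iff_of_nonneg (pow_nonneg hr n)]
  intro i
  rw [Pi.pow_apply, norm_pow, Real.norm_eq_abs]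
  exact pow_le_pow_left₀ (abs_nonneg _) (hd i) n

lemma Matrix.l2_opNorm_conj_diagonal_pow_le {ι : Type*} [Fintype ι] [DecidableEq ι]
    {T : Matrix ι ι ℝ} (hT : IsUnit T) {d : ι → ℝ} {r : ℝ} (hr : 0 ≤ r) (hd : ∀ i, |d i| ≤ r)
    (n : ℕ) : ‖(T * diagonal d * T⁻¹) ^ n‖ ≤ ‖T‖ * ‖T⁻¹‖ * r ^ n := by
  have h := norm_units_conj_pow_le hT.unit (diagonal d) n
  rw [coe_units_inv, IsUnit.unit_spec] at h
  calc _ ≤ _ := h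
    _ ≤ ‖T‖ * r ^ n * ‖T⁻¹‖ := by gcongr; exact l2_opNorm_diagonal_pow_le hr hd n
    _ = _ := by ring

lemma EuclideanSpace.norm_le_sqrt_card_mul {ι : Type*} [Fintype ι] {x : EuclideanSpace ℝ ι}
    {c : ℝ} (hc : 0 ≤ c) (hx : ∀ i, |x i| ≤ c) :
    ‖x‖ ≤ √(Fintype.card ι) * c := by
  rw [EuclideanSpace.norm_eq, ← Real.sqrt_sq hc, ← Real.sqrt_mul (Nat.cast_nonneg _)]
  refine Real.sqrt_le_sqrt ?_
  calc ∑ i, ‖x i‖ ^ 2 ≤ ∑ _i : ι, c ^ 2 :=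
        Finset.sum_le_sum fun i _ => pow_le_pow_left₀ (norm_nonneg _) (hx i) 2
    _ = Fintype.card ι * c ^ 2 := by simp

def delayVector (q : ℕ) (y : ℤ → ℝ) (t : ℤ) : Fin q → ℝ := fun i => y (t - (i : ℕ))

lemma companionMatrix_mulVec_delayVector {q : ℕ} (β : Fin q → ℝ) (y : ℤ → ℝ) (t : ℤ)
    (hy : y t = -∑ i : Fin q, β i * y (t - ((i : ℕ) + 1))) :
    companionMatrix β *ᵥ delayVector q y (t - 1) = delayVector q y t := by
  ext i
  simp only [mulVec, dotProduct, companionMatrix, delayVector]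
  rcases Nat.eq_zero_or_pos (i : ℕ) with hi | hi
  · simp only [hi, if_true, CharP.cast_eq_zero, sub_zero, hy, neg_mul, Finset.sum_neg_distrib]
    congr 2 with j
    congr 2
    ring
  · let j₀ : Fin q := ⟨(i : ℕ) - 1, by omega⟩
    rw [Finset.sum_eq_single j₀]
    · simp only [j₀, if_neg hi.ne', if_pos (by omega : (i : ℕ) = (i : ℕ) - 1 + 1), one_mul]
      congr 1
      omega
    · intro j _ hj
      have : (i : ℕ) ≠ (j : ℕ) + 1 := fun h => hj (Fin.ext (by simp [j₀]; omega))
      simp [hi.ne', this]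
    · simp

lemma companionMatrix_pow_mulVec_delayVector {q : ℕ} (β : Fin q → ℝ) (y : ℤ → ℝ)
    (hy : ∀ t : ℤ, 1 ≤ t → y t = -∑ i : Fin q, β i * y (t - ((i : ℕ) + 1))) (n : ℕ) :
    companionMatrix β ^ n *ᵥ delayVector q y 0 = delayVector q y n := by
  induction n with
  | zero => simp
  | succ n ih =>
    rw [pow_succ', ← mulVec_mulVec, ih]
    simpa using companionMatrix_mulVec_delayVector β y (n + 1) (hy _ (by omega))

theorem stmt_5 {q : ℕ} (hq : 1 ≤ q) (β : Fin q → ℝ)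
    (T Λ : Matrix (Fin q) (Fin q) ℝ) (d : Fin q → ℝ) (lam κ c : ℝ)
    (hlam : 0 ≤ lam) (hT : IsUnit T) (hΛ : Λ = Matrix.diagonal d)
    (hd : ∀ i, |d i| ≤ lam)
    (hF : companionMatrix β = T * Λ * T⁻¹)
    (hκ : κ = matrixOpNorm T * matrixOpNorm T⁻¹)
    (y : ℤ → ℝ)
    (hy : ∀ t : ℤ, 1 ≤ t → y t = -∑ i : Fin q, β i * y (t - ((i : ℕ) + 1)))
    (hc : 0 ≤ c) (hyc : ∀ i : Fin q, |y (-(i : ℕ))| ≤ c) :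
    ∀ m : ℤ, 0 ≤ m → |y m| ≤ κ * lam ^ m.toNat * c * Real.sqrt q := by
  intro m hm
  obtain ⟨n, rfl⟩ := Int.eq_ofNat_of_zero_le hm
  have hFn : ‖companionMatrix β ^ n‖ ≤ κ * lam ^ n := by
    rw [hF, hΛ, hκ, matrixOpNorm, matrixOpNorm, ← cstar_norm_def, ← cstar_norm_def]
    exact l2_opNorm_conj_diagonal_pow_le hT hlam hd n
  have hy0 : ‖WithLp.toLp 2 (delayVector q y 0)‖ ≤ √q * c := by
    have h := EuclideanSpace.norm_le_sqrt_card_mul (x := WithLp.toLp 2 (delayVector q y 0)) hc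
      fun i => by simpa [delayVector] using hyc i
    rwa [Fintype.card_fin] at h
  calc |y n| = |WithLp.toLp 2 (delayVector q y n) ⟨0, hq⟩| := by
        simp only [delayVector, CharP.cast_eq_zero, sub_zero]
    _ ≤ ‖WithLp.toLp 2 (companionMatrix β ^ n *ᵥ delayVector q y 0)‖ := by
      rw [companionMatrix_pow_mulVec_delayVector β y hy n, ← Real.norm_eq_abs]
      exact PiLp.norm_apply_le _ _
    _ ≤ ‖companionMatrix β ^ n‖ * ‖WithLp.toLp 2 (delayVector q y 0)‖ :=
      l2_opNorm_mulVec _ (WithLp.toLp 2 (delayVector q y 0))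
    _ ≤ κ * lam ^ n * (√q * c) :=
      mul_le_mul hFn hy0 (norm_nonneg _) ((norm_nonneg _).trans hFn)
    _ = κ * lam ^ (n : ℤ).toNat * c * √q := by rw [Int.toNat_natCast]; ring
end

section
/- Let S be a symmetric positive definite d×d real matrix whose smallest eigenvalue is μ > 0, let ψ ∈ ℝ^d, b ∈ ℝ^d, x ∈ ℝ, and L ≥ 0. Let γ = S⁻¹ b and γ' = (S + ψψᵀ)⁻¹ (b + x·ψ). If |x − ⟨ψ, γ⟩| · ‖ψ‖₂ ≤ L, then ‖γ' − γ‖₂ ≤ L / μ. -/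
open Matrix

/-- The Euclidean (ℓ²) norm of a vector in `ℝ^d`. -/
noncomputable def euclNorm {d : ℕ} (v : Fin d → ℝ) : ℝ :=
  ‖(WithLp.equiv 2 (Fin d → ℝ)).symm v‖

/-!
Put `A = S + ψψᵀ` and `v = γ' - γ`. Since `Sγ = b`, the normal equations give
`A v = (x - ⟨ψ, γ⟩) ψ`. As `ψψᵀ` is positive semidefinite and `S ≥ μ I`, the matrix `A` is
`μ`-coercive, so `μ ‖v‖² ≤ ⟨v, A v⟩ = (x - ⟨ψ, γ⟩) ⟨v, ψ⟩ ≤ |x - ⟨ψ, γ⟩| ‖ψ‖ ‖v‖ ≤ L ‖v‖`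
by Cauchy–Schwarz.
-/

namespace Matrix

variable {n : Type*} [Fintype n]

lemma add_vecMulVec_self_mulVec_sub {R : Type*} [CommRing R] {S : Matrix n n R}
    {ψ b γ γ' : n → R} {x : R} (hγ : S *ᵥ γ = b)
    (hγ' : (S + vecMulVec ψ ψ) *ᵥ γ' = b + x • ψ) :
    (S + vecMulVec ψ ψ) *ᵥ (γ' - γ) = (x - ψ ⬝ᵥ γ) • ψ := by
  rw [mulVec_sub, hγ', add_mulVec, hγ, vecMulVec_mulVec, op_smul_eq_smul, sub_smul]
  abel

variable [DecidableEq n]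

lemma IsHermitian.posSemidef_sub_algebraMap {S : Matrix n n ℝ} (hS : S.IsHermitian) {μ : ℝ}
    (hμ : μ ∈ lowerBounds (spectrum ℝ S)) : (S - algebraMap ℝ _ μ).PosSemidef := by
  refine posSemidef_iff_isHermitian_and_spectrum_nonneg.2 ⟨hS.sub ?_, ?_⟩
  · exact (IsSelfAdjoint.all μ).algebraMap _
  · rw [← spectrum.sub_singleton_eq]
    rintro _ ⟨s, hs, _, rfl, rfl⟩
    exact sub_nonneg.2 (hμ hs)

lemma IsHermitian.mul_dotProduct_self_le {S : Matrix n n ℝ} (hS : S.IsHermitian) {μ : ℝ}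
    (hμ : μ ∈ lowerBounds (spectrum ℝ S)) (v : n → ℝ) : μ * (v ⬝ᵥ v) ≤ v ⬝ᵥ S *ᵥ v := by
  have := (hS.posSemidef_sub_algebraMap hμ).dotProduct_mulVec_nonneg v
  simp only [star_trivial, Algebra.algebraMap_eq_smul_one, sub_mulVec, smul_mulVec, one_mulVec,
    dotProduct_sub, dotProduct_smul, smul_eq_mul] at this
  linarith

lemma mulVec_nonsing_inv_mulVec {R : Type*} [CommRing R] {S : Matrix n n R} (hS : IsUnit S)
    (b : n → R) : S *ᵥ (S⁻¹ *ᵥ b) = b := by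
  rw [mulVec_mulVec, mul_nonsing_inv _ ((isUnit_iff_isUnit_det S).1 hS), one_mulVec]

end Matrix

lemma dotProduct_self_eq_euclNorm_sq {d : ℕ} (v : Fin d → ℝ) : v ⬝ᵥ v = euclNorm v ^ 2 := by
  rw [euclNorm, ← real_inner_self_eq_norm_sq, EuclideanSpace.inner_eq_star_dotProduct]
  simp

lemma abs_dotProduct_le_euclNorm_mul {d : ℕ} (v w : Fin d → ℝ) :
    |v ⬝ᵥ w| ≤ euclNorm v * euclNorm w := by
  have := abs_real_inner_le_norm ((WithLp.equiv 2 (Fin d → ℝ)).symm w)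
    ((WithLp.equiv 2 (Fin d → ℝ)).symm v)
  rwa [EuclideanSpace.inner_eq_star_dotProduct, mul_comm] at this

lemma mul_euclNorm_le_of_mulVec_eq_smul {d : ℕ} {A : Matrix (Fin d) (Fin d) ℝ} {μ c : ℝ}
    {v ψ : Fin d → ℝ} (hA : μ * (v ⬝ᵥ v) ≤ v ⬝ᵥ A *ᵥ v) (hv : A *ᵥ v = c • ψ) :
    μ * euclNorm v ≤ |c| * euclNorm ψ := by
  have hv_nonneg : 0 ≤ euclNorm v := norm_nonneg _
  have key : (μ * euclNorm v) * euclNorm v ≤ (|c| * euclNorm ψ) * euclNorm v :=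
    calc (μ * euclNorm v) * euclNorm v = μ * (v ⬝ᵥ v) := by
          rw [dotProduct_self_eq_euclNorm_sq]; ring
      _ ≤ c * (v ⬝ᵥ ψ) := by rwa [hv, dotProduct_smul] at hA
      _ ≤ |c| * |v ⬝ᵥ ψ| := (le_abs_self _).trans (abs_mul _ _).le
      _ ≤ |c| * (euclNorm v * euclNorm ψ) := by
          gcongr; exact abs_dotProduct_le_euclNorm_mul v ψ
      _ = (|c| * euclNorm ψ) * euclNorm v := by ring
  rcases hv_nonneg.eq_or_lt with hv0 | hv_pos
  · rw [← hv0, mul_zero]; exact mul_nonneg (abs_nonneg c) (norm_nonneg _)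
  · exact le_of_mul_le_mul_right key hv_pos

theorem stmt_11_general {d : ℕ} (S : Matrix (Fin d) (Fin d) ℝ) (hS : S.PosDef)
    (μ : ℝ) (hμ : IsLeast (spectrum ℝ S) μ) (hμpos : 0 < μ)
    (ψ b : Fin d → ℝ) (x L : ℝ)
    (γ γ' : Fin d → ℝ)
    (hγ : γ = S⁻¹.mulVec b)
    (hγ' : γ' = (S + vecMulVec ψ ψ)⁻¹.mulVec (b + x • ψ))
    (hgrad : |x - ψ ⬝ᵥ γ| * euclNorm ψ ≤ L) :
    euclNorm (γ' - γ) ≤ L / μ := by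
  have hψψ : (vecMulVec ψ ψ).PosSemidef := by simpa using posSemidef_vecMulVec_self_star ψ
  have hA : (S + vecMulVec ψ ψ).PosDef := hS.add_posSemidef hψψ
  have hcoercive : μ * ((γ' - γ) ⬝ᵥ (γ' - γ)) ≤ (γ' - γ) ⬝ᵥ (S + vecMulVec ψ ψ) *ᵥ (γ' - γ) := by
    have := hψψ.dotProduct_mulVec_nonneg (γ' - γ)
    rw [star_trivial] at this
    rw [add_mulVec, dotProduct_add]
    linarith [hS.isHermitian.mul_dotProduct_self_le hμ.2 (γ' - γ)]
  have hstep : (S + vecMulVec ψ ψ) *ᵥ (γ' - γ) = (x - ψ ⬝ᵥ γ) • ψ :=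
    add_vecMulVec_self_mulVec_sub (hγ ▸ mulVec_nonsing_inv_mulVec hS.isUnit b)
      (hγ' ▸ mulVec_nonsing_inv_mulVec hA.isUnit _)
  rw [le_div_iff₀' hμpos]
  exact (mul_euclNorm_le_of_mulVec_eq_smul hcoercive hstep).trans hgrad

theorem stmt_11 {d : ℕ} (S : Matrix (Fin d) (Fin d) ℝ) (hS : S.PosDef)
    (μ : ℝ) (hμ : IsLeast (spectrum ℝ S) μ) (hμpos : 0 < μ)
    (ψ b : Fin d → ℝ) (x L : ℝ) (hL : 0 ≤ L)
    (γ γ' : Fin d → ℝ)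
    (hγ : γ = S⁻¹.mulVec b)
    (hγ' : γ' = (S + vecMulVec ψ ψ)⁻¹.mulVec (b + x • ψ))
    (hgrad : |x - ψ ⬝ᵥ γ| * euclNorm ψ ≤ L) :
    euclNorm (γ' - γ) ≤ L / μ :=
  stmt_11_general S hS μ hμ hμpos ψ b x L γ γ' hγ hγ' hgrad
end

section
/- In the weighted-majority setup with parameter η satisfying 0 ≤ η < 1, the total weight after T rounds satisfies W_{T+1} ≤ n · exp(−η · ∑_{t=1}^T ℓ_t(ALG)/b_t). -/
lemma rpow_le_one_sub_mul (η x : ℝ) (hη0 : 0 ≤ η) (hη1 : η < 1)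
    (hx0 : 0 ≤ x) (hx1 : x ≤ 1) : (1 - η) ^ x ≤ 1 - η * x := by
  have ha : (0 : ℝ) < 1 - η := by linarith
  have key := convexOn_exp.2 (Set.mem_univ (0 : ℝ))
    (Set.mem_univ (Real.log (1 - η))) (by linarith : (0:ℝ) ≤ 1 - x) hx0
    (by ring)
  simp only [smul_eq_mul, mul_zero, zero_add, Real.exp_zero,
    Real.exp_log ha] at key
  rw [Real.rpow_def_of_pos ha]
  calc Real.exp (Real.log (1 - η) * x) = Real.exp (x * Real.log (1 - η)) := by
        ring_nf
    _ ≤ (1 - x) * 1 + x * (1 - η) := key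
    _ = 1 - η * x := by ring

theorem stmt_13 {H : Type*} [Fintype H] (n T : ℕ) (hn : 2 ≤ n)
    (hcard : Fintype.card H = n) (hT : 1 ≤ T)
    (ℓ : ℕ → H → ℝ) (b : ℕ → ℝ) (η : ℝ)
    (hη0 : 0 ≤ η) (hη1 : η < 1)
    (hℓ0 : ∀ t ∈ Finset.Icc 1 T, ∀ h : H, 0 ≤ ℓ t h)
    (hb : ∀ t ∈ Finset.Icc 1 T, 0 < b t)
    (hℓb : ∀ t ∈ Finset.Icc 1 T, ∀ h : H, ℓ t h ≤ b t)
    (w : ℕ → H → ℝ)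
    (hw1 : ∀ h : H, w 1 h = 1)
    (hwrec : ∀ t ∈ Finset.Icc 1 T, ∀ h : H,
      w (t + 1) h = w t h * (1 - η) ^ (ℓ t h / b t)) :
    ∑ h : H, w (T + 1) h ≤
      (n : ℝ) * Real.exp (-η * ∑ t ∈ Finset.Icc 1 T,
        ((∑ h : H, w t h * ℓ t h) / (∑ h : H, w t h)) / b t) := by
  have ha : (0 : ℝ) < 1 - η := by linarith
  -- positivity of weights
  have hwpos : ∀ t, t ≤ T → ∀ h, 0 < w (t + 1) h := by
    intro t ht
    induction t with
    | zero => intro h; rw [hw1 h]; norm_num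
    | succ s ih =>
      intro h
      have hs : s + 1 ∈ Finset.Icc 1 T := by
        simp [Finset.mem_Icc]; omega
      rw [hwrec (s+1) hs h]
      exact mul_pos (ih (by omega) h) (Real.rpow_pos_of_pos ha _)
  -- main induction
  have main : ∀ t, t ≤ T → ∑ h : H, w (t + 1) h ≤
      (n : ℝ) * Real.exp (-η * ∑ s ∈ Finset.Icc 1 t,
        ((∑ h : H, w s h * ℓ s h) / (∑ h : H, w s h)) / b s) := by
    intro t ht
    induction t with
    | zero =>
      simp only [Finset.Icc_eq_empty_of_lt (by norm_num : (0:ℕ) < 1),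
        Finset.sum_empty, mul_zero, Real.exp_zero, mul_one]
      simp only [hw1, Finset.sum_const, nsmul_eq_mul, mul_one, hcard]
      exact_mod_cast hcard.le
    | succ s ih =>
      have hs : s + 1 ∈ Finset.Icc 1 T := by simp [Finset.mem_Icc]; omega
      have hbpos := hb _ hs
      have hWpos : 0 < ∑ h : H, w (s + 1) h := by
        apply Finset.sum_pos (fun h _ => hwpos s (by omega) h)
        rw [Finset.univ_nonempty_iff]
        have : 0 < Fintype.card H := by omega
        exact Fintype.card_pos_iff.mp this
      set W := ∑ h : H, w (s + 1) h with hW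
      set S := ∑ h : H, w (s + 1) h * ℓ (s + 1) h with hS
      set L := (S / W) / b (s + 1) with hL
      have step1 : ∑ h : H, w (s + 1 + 1) h ≤ W * (1 - η * L) := by
        have : ∑ h : H, w (s + 1 + 1) h ≤
            ∑ h : H, w (s + 1) h * (1 - η * (ℓ (s + 1) h / b (s + 1))) := by
          apply Finset.sum_le_sum
          intro h _
          rw [hwrec _ hs h]
          apply mul_le_mul_of_nonneg_left _ (hwpos s (by omega) h).le
          exact rpow_le_one_sub_mul η _ hη0 hη1
            (div_nonneg (hℓ0 _ hs h) hbpos.le)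
            ((div_le_one hbpos).mpr (hℓb _ hs h))
        refine this.trans_eq ?_
        have expand : ∑ h : H, w (s + 1) h * (1 - η * (ℓ (s + 1) h / b (s + 1)))
            = W - η * (S / b (s + 1)) := by
          simp only [mul_sub, mul_one, Finset.sum_sub_distrib]
          congr 1
          rw [hS, Finset.sum_div, Finset.mul_sum]
          apply Finset.sum_congr rfl
          intro h _
          field_simp
        rw [expand, hL]
        field_simp
      have step2 : W * (1 - η * L) ≤ W * Real.exp (-η * L) := by
        apply mul_le_mul_of_nonneg_left _ hWpos.le
        have := Real.add_one_le_exp (-η * L)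
        linarith
      have hsum : ∑ u ∈ Finset.Icc 1 (s + 1),
          ((∑ h : H, w u h * ℓ u h) / (∑ h : H, w u h)) / b u
          = (∑ u ∈ Finset.Icc 1 s,
          ((∑ h : H, w u h * ℓ u h) / (∑ h : H, w u h)) / b u) + L := by
        rw [Finset.sum_Icc_succ_top (by omega : 1 ≤ s + 1)]
      calc ∑ h : H, w (s + 1 + 1) h ≤ W * Real.exp (-η * L) :=
            step1.trans step2
        _ ≤ ((n : ℝ) * Real.exp (-η * ∑ u ∈ Finset.Icc 1 s,
              ((∑ h : H, w u h * ℓ u h) / (∑ h : H, w u h)) / b u))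
              * Real.exp (-η * L) := by
            exact mul_le_mul_of_nonneg_right (ih (by omega)) (Real.exp_pos _).le
        _ = (n : ℝ) * Real.exp (-η * ∑ u ∈ Finset.Icc 1 (s + 1),
              ((∑ h : H, w u h * ℓ u h) / (∑ h : H, w u h)) / b u) := by
            rw [hsum, mul_assoc, ← Real.exp_add]
            congr 2
            ring
  exact main T le_rfl
end

section
/- In the weighted-majority setup with parameter η satisfying 0 < η ≤ 1/2, for every expert h ∈ H: ∑_{t=1}^T (ℓ_t(ALG) − ℓ_t(h))/b_t ≤ (log n)/η + η · ∑_{t=1}^T ℓ_t(h)/b_t. -/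
/-!
Track the total weight `W_t`. Since `(1 - η) ^ x ≤ 1 - η x` on `[0, 1]`, each round multiplies it
by at most `1 - η ℓ_t(ALG)/b_t ≤ exp (-η ℓ_t(ALG)/b_t)`, so `W_{T+1} ≤ n exp (-η ∑ ℓ_t(ALG)/b_t)`.
On the other hand `W_{T+1} ≥ w_{T+1}(h) = (1 - η) ^ (∑ ℓ_t(h)/b_t)`. Taking logarithms and using
`-log (1 - η) ≤ η + η²` for `η ≤ 1/2` gives the bound.
-/

open Finset Real

lemma neg_log_one_sub_le {η : ℝ} (hη0 : 0 ≤ η) (hη1 : η ≤ 1 / 2) :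
    -log (1 - η) ≤ η + η ^ 2 := by
  have hpos : 0 < 1 - η := by linarith
  have hprod : 1 ≤ (1 - η) * exp η * exp (η ^ 2) := by
    have hq := quadratic_le_exp_of_nonneg hη0
    have hl := add_one_le_exp (η ^ 2)
    have hpoly : 1 ≤ (1 - η) * (1 + η + η ^ 2 / 2) * (η ^ 2 + 1) := by
      nlinarith [pow_le_pow_left₀ hη0 hη1 2, pow_le_pow_left₀ hη0 hη1 3, sq_nonneg η,
        mul_nonneg hη0 (sq_nonneg η)]
    calc 1 ≤ (1 - η) * (1 + η + η ^ 2 / 2) * (η ^ 2 + 1) := hpoly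
      _ ≤ (1 - η) * exp η * exp (η ^ 2) := by gcongr
  have hlog := log_nonneg hprod
  rw [log_mul (by positivity) (exp_ne_zero _), log_mul hpos.ne' (exp_ne_zero _), log_exp,
    log_exp] at hlog
  linarith

lemma sub_le_mul_exp_neg_div {W a : ℝ} (hW : 0 ≤ W) (ha : 0 ≤ a) :
    W - a ≤ W * exp (-a / W) := by
  rcases hW.eq_or_lt with rfl | hW
  · simpa using ha
  · calc W - a = W * (-a / W + 1) := by field_simp; ring
      _ ≤ W * exp (-a / W) := by gcongr; exact add_one_le_exp _

section

variable {H : Type*}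

/-- `ℓ_t(ALG)` is `weightedMean (w t) (ℓ t)`. -/
noncomputable def weightedMean [Fintype H] (v x : H → ℝ) : ℝ := (∑ h, v h * x h) / ∑ h, v h

lemma sum_mul_one_sub_rpow_le [Fintype H] {v x : H → ℝ} {β η : ℝ} (hv : ∀ h, 0 ≤ v h)
    (hx0 : ∀ h, 0 ≤ x h) (hxβ : ∀ h, x h ≤ β) (hβ : 0 < β) (hη0 : 0 ≤ η) (hη1 : η ≤ 1) :
    ∑ h, v h * (1 - η) ^ (x h / β) ≤ (∑ h, v h) * exp (-η * (weightedMean v x / β)) := by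
  have hbern : ∀ h, (1 - η) ^ (x h / β) ≤ 1 - η * (x h / β) := fun h => by
    simpa [sub_eq_add_neg, mul_neg, mul_comm] using
      rpow_one_add_le_one_add_mul_self (by linarith : -1 ≤ -η) (div_nonneg (hx0 h) hβ.le)
        ((div_le_one hβ).2 (hxβ h))
  calc ∑ h, v h * (1 - η) ^ (x h / β)
      ≤ ∑ h, v h * (1 - η * (x h / β)) := sum_le_sum fun h _ => by gcongr; exacts [hv h, hbern h]
    _ = (∑ h, v h) - η / β * ∑ h, v h * x h := by
      simp only [mul_sub, mul_one, sum_sub_distrib, mul_sum]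
      congr 1
      exact sum_congr rfl fun h _ => by ring
    _ ≤ (∑ h, v h) * exp (-(η / β * ∑ h, v h * x h) / ∑ h, v h) :=
      sub_le_mul_exp_neg_div (sum_nonneg fun h _ => hv h)
        (mul_nonneg (div_nonneg hη0 hβ.le) (sum_nonneg fun h _ => mul_nonneg (hv h) (hx0 h)))
    _ = (∑ h, v h) * exp (-η * (weightedMean v x / β)) := by
      unfold weightedMean
      ring_nf

variable {T : ℕ} {ℓ : ℕ → H → ℝ} {b : ℕ → ℝ} {η : ℝ} {w : ℕ → H → ℝ}

lemma weight_nonneg (hη1 : η ≤ 1) (hw1 : ∀ h, w 1 h = 1)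
    (hwrec : ∀ t ∈ Icc 1 T, ∀ h, w (t + 1) h = w t h * (1 - η) ^ (ℓ t h / b t)) :
    ∀ k ≤ T, ∀ h, 0 ≤ w (k + 1) h := by
  intro k
  induction k with
  | zero => simp [hw1]
  | succ k ih =>
    intro hk h
    rw [hwrec (k + 1) (by simp; omega)]
    exact mul_nonneg (ih (by omega) h) (rpow_nonneg (by linarith) _)

lemma weight_eq_rpow_sum (hη1 : η < 1) (hw1 : ∀ h, w 1 h = 1)
    (hwrec : ∀ t ∈ Icc 1 T, ∀ h, w (t + 1) h = w t h * (1 - η) ^ (ℓ t h / b t)) (h : H) :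
    ∀ k ≤ T, w (k + 1) h = (1 - η) ^ (∑ t ∈ Icc 1 k, ℓ t h / b t) := by
  intro k
  induction k with
  | zero => simp [hw1]
  | succ k ih =>
    intro hk
    rw [hwrec (k + 1) (by simp; omega), ih (by omega), sum_Icc_succ_top (by omega),
      rpow_add (by linarith)]

lemma sum_weight_le [Fintype H] (hη0 : 0 ≤ η) (hη1 : η ≤ 1) (hℓ0 : ∀ t ∈ Icc 1 T, ∀ h, 0 ≤ ℓ t h)
    (hb : ∀ t ∈ Icc 1 T, 0 < b t) (hℓb : ∀ t ∈ Icc 1 T, ∀ h, ℓ t h ≤ b t)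
    (hw1 : ∀ h, w 1 h = 1)
    (hwrec : ∀ t ∈ Icc 1 T, ∀ h, w (t + 1) h = w t h * (1 - η) ^ (ℓ t h / b t)) :
    ∀ k ≤ T, ∑ h, w (k + 1) h ≤
      Fintype.card H * exp (-η * ∑ t ∈ Icc 1 k, weightedMean (w t) (ℓ t) / b t) := by
  intro k
  induction k with
  | zero => simp [hw1]
  | succ k ih =>
    intro hk
    have ht : k + 1 ∈ Icc 1 T := by simp; omega
    calc ∑ h, w (k + 1 + 1) h
        = ∑ h, w (k + 1) h * (1 - η) ^ (ℓ (k + 1) h / b (k + 1)) :=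
          sum_congr rfl fun h _ => hwrec _ ht h
      _ ≤ (∑ h, w (k + 1) h) * exp (-η * (weightedMean (w (k + 1)) (ℓ (k + 1)) / b (k + 1))) :=
          sum_mul_one_sub_rpow_le (weight_nonneg hη1 hw1 hwrec k (by omega)) (hℓ0 _ ht)
            (hℓb _ ht) (hb _ ht) hη0 hη1
      _ ≤ Fintype.card H * exp (-η * ∑ t ∈ Icc 1 k, weightedMean (w t) (ℓ t) / b t) *
            exp (-η * (weightedMean (w (k + 1)) (ℓ (k + 1)) / b (k + 1))) := by
          gcongr
          exact ih (by omega)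
      _ = Fintype.card H * exp (-η * ∑ t ∈ Icc 1 (k + 1), weightedMean (w t) (ℓ t) / b t) := by
          rw [sum_Icc_succ_top (by omega), mul_assoc, ← exp_add, mul_add]

end

theorem stmt_15_general {H : Type*} [Fintype H] (n T : ℕ)
    (hcard : Fintype.card H = n)
    (ℓ : ℕ → H → ℝ) (b : ℕ → ℝ) (η : ℝ)
    (hη0 : 0 < η) (hη1 : η ≤ 1 / 2)
    (hℓ0 : ∀ t ∈ Finset.Icc 1 T, ∀ h : H, 0 ≤ ℓ t h)
    (hb : ∀ t ∈ Finset.Icc 1 T, 0 < b t)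
    (hℓb : ∀ t ∈ Finset.Icc 1 T, ∀ h : H, ℓ t h ≤ b t)
    (w : ℕ → H → ℝ)
    (hw1 : ∀ h : H, w 1 h = 1)
    (hwrec : ∀ t ∈ Finset.Icc 1 T, ∀ h : H,
      w (t + 1) h = w t h * (1 - η) ^ (ℓ t h / b t)) :
    ∀ h : H,
      ∑ t ∈ Finset.Icc 1 T,
          ((∑ h' : H, w t h' * ℓ t h') / (∑ h' : H, w t h') - ℓ t h) / b t ≤
        Real.log n / η + η * ∑ t ∈ Finset.Icc 1 T, ℓ t h / b t := by
  intro h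
  set L := ∑ t ∈ Icc 1 T, ℓ t h / b t
  set A := ∑ t ∈ Icc 1 T, weightedMean (w t) (ℓ t) / b t
  have hn_pos : (0 : ℝ) < n := by rw [← hcard]; exact_mod_cast Fintype.card_pos_iff.2 ⟨h⟩
  have hL : 0 ≤ L := sum_nonneg fun t ht => div_nonneg (hℓ0 t ht h) (hb t ht).le
  have hregret : ∑ t ∈ Icc 1 T, ((∑ h', w t h' * ℓ t h') / (∑ h', w t h') - ℓ t h) / b t
      = A - L := by
    rw [← sum_sub_distrib]
    exact sum_congr rfl fun t _ => sub_div _ _ _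
  have hpotential : (1 - η) ^ L ≤ n * exp (-η * A) := by
    rw [← weight_eq_rpow_sum (by linarith) hw1 hwrec h T le_rfl, ← hcard]
    exact (single_le_sum (fun h' _ => weight_nonneg (by linarith) hw1 hwrec T le_rfl h')
      (mem_univ h)).trans (sum_weight_le hη0.le (by linarith) hℓ0 hb hℓb hw1 hwrec T le_rfl)
  have hlog : L * log (1 - η) ≤ log n - η * A := by
    have := log_le_log (rpow_pos_of_pos (by linarith) _) hpotential
    rwa [log_rpow (by linarith), log_mul hn_pos.ne' (exp_ne_zero _), log_exp, neg_mul,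
      ← sub_eq_add_neg] at this
  rw [hregret, div_add' _ _ _ hη0.ne', le_div_iff₀ hη0]
  nlinarith [mul_le_mul_of_nonneg_left (neg_log_one_sub_le hη0.le hη1) hL]

theorem stmt_15 {H : Type*} [Fintype H] (n T : ℕ) (hn : 2 ≤ n)
    (hcard : Fintype.card H = n) (hT : 1 ≤ T)
    (ℓ : ℕ → H → ℝ) (b : ℕ → ℝ) (η : ℝ)
    (hη0 : 0 < η) (hη1 : η ≤ 1 / 2)
    (hℓ0 : ∀ t ∈ Finset.Icc 1 T, ∀ h : H, 0 ≤ ℓ t h)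
    (hb : ∀ t ∈ Finset.Icc 1 T, 0 < b t)
    (hℓb : ∀ t ∈ Finset.Icc 1 T, ∀ h : H, ℓ t h ≤ b t)
    (w : ℕ → H → ℝ)
    (hw1 : ∀ h : H, w 1 h = 1)
    (hwrec : ∀ t ∈ Finset.Icc 1 T, ∀ h : H,
      w (t + 1) h = w t h * (1 - η) ^ (ℓ t h / b t)) :
    ∀ h : H,
      ∑ t ∈ Finset.Icc 1 T,
          ((∑ h' : H, w t h' * ℓ t h') / (∑ h' : H, w t h') - ℓ t h) / b t ≤
        Real.log n / η + η * ∑ t ∈ Finset.Icc 1 T, ℓ t h / b t :=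
  stmt_15_general n T hcard ℓ b η hη0 hη1 hℓ0 hb hℓb w hw1 hwrec
end

section
/- In the weighted-majority setup, suppose the scales are constant: b_t = B for all t = 1, …, T, where B > 0 (so all losses lie in [0, B]). If η = √((log n)/T) and η ≤ 1/2, then the regret satisfies ∑_{t=1}^T ℓ_t(ALG) − min_{h∈H} ∑_{t=1}^T ℓ_t(h) ≤ 2·B·√(T · log n). -/
theorem stmt_17 {H : Type*} [Fintype H] (n T : ℕ) (hn : 2 ≤ n)
    (hcard : Fintype.card H = n) (hT : 1 ≤ T)
    (ℓ : ℕ → H → ℝ) (b : ℕ → ℝ) (B η : ℝ)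
    (hB : 0 < B) (hbB : ∀ t ∈ Finset.Icc 1 T, b t = B)
    (hη : η = Real.sqrt (Real.log n / T)) (hη1 : η ≤ 1 / 2)
    (hℓ0 : ∀ t ∈ Finset.Icc 1 T, ∀ h : H, 0 ≤ ℓ t h)
    (hℓb : ∀ t ∈ Finset.Icc 1 T, ∀ h : H, ℓ t h ≤ b t)
    (w : ℕ → H → ℝ)
    (hw1 : ∀ h : H, w 1 h = 1)
    (hwrec : ∀ t ∈ Finset.Icc 1 T, ∀ h : H,
      w (t + 1) h = w t h * (1 - η) ^ (ℓ t h / b t)) :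
    ∑ t ∈ Finset.Icc 1 T, (∑ h' : H, w t h' * ℓ t h') / (∑ h' : H, w t h') -
        ⨅ h : H, ∑ t ∈ Finset.Icc 1 T, ℓ t h ≤
      2 * B * Real.sqrt (T * Real.log n) := by
  have hne : Nonempty H := Fintype.card_pos_iff.mp (by omega)
  have hlog : 0 < Real.log n :=
    Real.log_pos (by exact_mod_cast Nat.lt_of_lt_of_le one_lt_two hn)
  have hTpos : (0:ℝ) < T := by exact_mod_cast hT
  have hηpos : 0 < η := by
    rw [hη]; exact Real.sqrt_pos.mpr (div_pos hlog hTpos)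
  have hη2 : η ^ 2 = Real.log n / T := by
    rw [hη]; exact Real.sq_sqrt (le_of_lt (div_pos hlog hTpos))
  have h1ηpos : (0:ℝ) < 1 - η := by linarith
  -- positivity of weights for t ≤ T+1
  have hwpos : ∀ t, 1 ≤ t → t ≤ T + 1 → ∀ h : H, 0 < w t h := by
    intro t ht
    induction t, ht using Nat.le_induction with
    | base => intro _ h; rw [hw1]; norm_num
    | succ t ht ih =>
      intro htT h
      rw [hwrec t (Finset.mem_Icc.mpr ⟨ht, by omega⟩) h]
      exact mul_pos (ih (by omega) h) (Real.rpow_pos_of_pos h1ηpos _)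
  have hWpos : ∀ t, 1 ≤ t → t ≤ T + 1 → 0 < ∑ h' : H, w t h' := fun t h1 h2 =>
    Finset.sum_pos (fun h _ => hwpos t h1 h2 h) Finset.univ_nonempty
  -- pointwise convexity bound
  have hpow : ∀ x : ℝ, 0 ≤ x → x ≤ 1 → (1 - η) ^ x ≤ 1 - η * x := by
    intro x hx0 hx1
    have := Real.geom_mean_le_arith_mean2_weighted (sub_nonneg.mpr hx1) hx0
      zero_le_one h1ηpos.le (by ring)
    rw [Real.one_rpow, one_mul] at this
    nlinarith [this]
  set A : ℕ → ℝ := fun t => (∑ h' : H, w t h' * ℓ t h') / (∑ h' : H, w t h') with hA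
  -- upper bound on total weight
  have hmain : ∀ t, t ≤ T →
      (∑ h' : H, w (t+1) h') ≤ n * Real.exp (-(η/B) * ∑ s ∈ Finset.Icc 1 t, A s) := by
    intro t
    induction t with
    | zero =>
      intro _
      simp [hw1, hcard]
    | succ t ih =>
      intro ht
      have ih' := ih (by omega)
      have hmem : t + 1 ∈ Finset.Icc 1 T := Finset.mem_Icc.mpr ⟨by omega, ht⟩
      have hW1 : 0 < ∑ h' : H, w (t+1) h' := hWpos (t+1) (by omega) (by omega)
      have step1 : (∑ h' : H, w (t+2) h') ≤
          (∑ h' : H, w (t+1) h') * (1 - (η/B) * A (t+1)) := by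
        have e1 : ∀ h : H, w (t+2) h ≤ w (t+1) h * (1 - η * (ℓ (t+1) h / B)) := by
          intro h
          have := hwrec (t+1) hmem h
          rw [hbB (t+1) hmem] at this
          rw [show t + 2 = t + 1 + 1 from rfl, this]
          exact mul_le_mul_of_nonneg_left
            (hpow _ (div_nonneg (hℓ0 _ hmem h) hB.le)
              (div_le_one_of_le₀ (by rw [← hbB (t+1) hmem]; exact hℓb _ hmem h) hB.le))
            (hwpos (t+1) (by omega) (by omega) h).le
        calc (∑ h' : H, w (t+2) h')
            ≤ ∑ h' : H, w (t+1) h' * (1 - η * (ℓ (t+1) h' / B)) :=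
              Finset.sum_le_sum (fun h _ => e1 h)
          _ = (∑ h' : H, w (t+1) h') - (η/B) * ∑ h' : H, w (t+1) h' * ℓ (t+1) h' := by
              rw [Finset.mul_sum, ← Finset.sum_sub_distrib]
              exact Finset.sum_congr rfl fun h _ => by ring
          _ = (∑ h' : H, w (t+1) h') * (1 - (η/B) * A (t+1)) := by
              simp only [hA]
              field_simp
      have step2 : (∑ h' : H, w (t+1) h') * (1 - (η/B) * A (t+1)) ≤
          (∑ h' : H, w (t+1) h') * Real.exp (-((η/B) * A (t+1))) := by
        refine mul_le_mul_of_nonneg_left ?_ hW1.le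
        have := Real.add_one_le_exp (-((η/B) * A (t+1)))
        linarith
      have step3 : (∑ h' : H, w (t+1) h') * Real.exp (-((η/B) * A (t+1))) ≤
          n * Real.exp (-(η/B) * ∑ s ∈ Finset.Icc 1 t, A s) *
            Real.exp (-((η/B) * A (t+1))) :=
        mul_le_mul_of_nonneg_right ih' (Real.exp_nonneg _)
      have hsum : ∑ s ∈ Finset.Icc 1 (t+1), A s =
          (∑ s ∈ Finset.Icc 1 t, A s) + A (t+1) :=
        Finset.sum_Icc_succ_top (by omega) A
      calc (∑ h' : H, w (t+1+1) h') ≤ _ := step1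
        _ ≤ _ := step2
        _ ≤ _ := step3
        _ = n * Real.exp (-(η/B) * ∑ s ∈ Finset.Icc 1 (t+1), A s) := by
            rw [mul_assoc, ← Real.exp_add, hsum]
            congr 2
            ring
  -- closed form of final weights
  have hwform : ∀ t, t ≤ T → ∀ h : H,
      w (t+1) h = (1 - η) ^ ((∑ s ∈ Finset.Icc 1 t, ℓ s h) / B) := by
    intro t
    induction t with
    | zero => intro _ h; simp [hw1]
    | succ t ih =>
      intro ht h
      have hmem : t + 1 ∈ Finset.Icc 1 T := Finset.mem_Icc.mpr ⟨by omega, ht⟩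
      have := hwrec (t+1) hmem h
      rw [hbB (t+1) hmem] at this
      rw [show t + 1 + 1 = t + 2 from rfl] at this
      rw [show t + 1 + 1 = t + 2 from rfl, this, ih (by omega) h,
        ← Real.rpow_add h1ηpos, Finset.sum_Icc_succ_top (by omega : 1 ≤ t + 1),
        add_div]
  -- per-expert regret bound
  have hlogη : -Real.log (1 - η) ≤ η + η ^ 2 := by
    have hy : (0:ℝ) ≤ η + η ^ 2 := by positivity
    have hq := Real.quadratic_le_exp_of_nonneg hy
    have hexp : Real.exp (-(η + η ^ 2)) ≤ 1 - η := by
      rw [Real.exp_neg]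
      rw [inv_le_comm₀ (Real.exp_pos _) h1ηpos]
      calc (1 - η)⁻¹ ≤ 1 + (η + η^2) + (η + η^2)^2/2 := by
            rw [inv_le_iff_one_le_mul₀ h1ηpos]
            nlinarith [sq_nonneg η, hηpos.le]
        _ ≤ Real.exp (η + η^2) := hq
    have := Real.log_le_log (Real.exp_pos _) hexp
    rw [Real.log_exp] at this
    linarith
  have key : ∀ h : H, (∑ s ∈ Finset.Icc 1 T, A s) - (∑ t ∈ Finset.Icc 1 T, ℓ t h)
      ≤ 2 * B * (η * T) := by
    intro h
    have hLh0 : 0 ≤ ∑ t ∈ Finset.Icc 1 T, ℓ t h :=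
      Finset.sum_nonneg (fun t htm => hℓ0 t htm h)
    have hLhT : (∑ t ∈ Finset.Icc 1 T, ℓ t h) ≤ T * B := by
      calc (∑ t ∈ Finset.Icc 1 T, ℓ t h) ≤ ∑ t ∈ Finset.Icc 1 T, B :=
            Finset.sum_le_sum (fun t htm => by
              rw [← hbB t htm]; exact hℓb t htm h)
        _ = T * B := by rw [Finset.sum_const, Nat.card_Icc]; simp
    have hlow : (1 - η) ^ ((∑ t ∈ Finset.Icc 1 T, ℓ t h) / B) ≤
        n * Real.exp (-(η/B) * ∑ s ∈ Finset.Icc 1 T, A s) := by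
      rw [← hwform T le_rfl h]
      calc w (T+1) h ≤ ∑ h' : H, w (T+1) h' :=
            Finset.single_le_sum (fun h' _ => (hwpos (T+1) (by omega) le_rfl h').le)
              (Finset.mem_univ h)
        _ ≤ _ := hmain T le_rfl
    have hnpos : (0:ℝ) < n := by positivity
    have hloglow := Real.log_le_log (Real.rpow_pos_of_pos h1ηpos _) hlow
    rw [Real.log_rpow h1ηpos, Real.log_mul (ne_of_gt hnpos) (Real.exp_ne_zero _),
      Real.log_exp] at hloglow
    -- hloglow : (L/B) * log (1-η) ≤ log n + (-(η/B) * S)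
    set S := ∑ s ∈ Finset.Icc 1 T, A s
    set L := ∑ t ∈ Finset.Icc 1 T, ℓ t h
    have h1 : (η / B) * S ≤ Real.log n + (L / B) * (η + η ^ 2) := by
      have : (L / B) * (-Real.log (1 - η)) ≤ (L / B) * (η + η ^ 2) :=
        mul_le_mul_of_nonneg_left hlogη (div_nonneg hLh0 hB.le)
      nlinarith [hloglow]
    -- multiply by B/η
    have h2 : S ≤ (B / η) * Real.log n + L * (1 + η) := by
      have hBη : 0 < B / η := div_pos hB hηpos
      have := mul_le_mul_of_nonneg_left h1 hBη.le
      have e1 : (B / η) * ((η / B) * S) = S := by field_simp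
      have e2 : (B / η) * (Real.log n + (L / B) * (η + η ^ 2))
          = (B / η) * Real.log n + L * (1 + η) := by field_simp
      rw [e1, e2] at this
      exact this
    have hBηlog : (B / η) * Real.log n = B * (η * T) := by
      have : Real.log n = η ^ 2 * T := by
        rw [hη2]; field_simp
      rw [this]; field_simp
    have hηL : η * L ≤ B * (η * T) := by
      have := mul_le_mul_of_nonneg_left hLhT hηpos.le
      nlinarith
    nlinarith [h2]
  have hsqrt : Real.sqrt (T * Real.log n) = η * T := by
    have e : (T:ℝ) * Real.log n = (η * T) ^ 2 := by
      have : Real.log n = η ^ 2 * T := by rw [hη2]; field_simp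
      rw [this]; ring
    rw [e, Real.sqrt_sq (by positivity)]
  rw [hsqrt, sub_le_iff_le_add, ← sub_le_iff_le_add']
  exact le_ciInf (fun h => by linarith [key h])
end

section
/- Let E be a real inner product space, T ≥ 1, η > 0, let x_1, …, x_{T+1} ∈ E and g_1, …, g_T ∈ E, and let u ∈ E. Assume that for each t = 1, …, T, ‖x_{t+1} − u‖ ≤ ‖(x_t − η·g_t) − u‖ (nonexpansiveness of the update toward u, satisfied when x_{t+1} is the metric projection of x_t − η·g_t onto a convex set containing u). Then ∑_{t=1}^T ⟨g_t, x_t − u⟩ ≤ ‖x_1 − u‖²/(2η) + (η/2)·∑_{t=1}^T ‖g_t‖². -/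
open scoped RealInnerProductSpace

theorem stmt_18 {E : Type*} [NormedAddCommGroup E] [InnerProductSpace ℝ E]
    (T : ℕ) (hT : 1 ≤ T) (η : ℝ) (hη : 0 < η)
    (x g : ℕ → E) (u : E)
    (hstep : ∀ t ∈ Finset.Icc 1 T, ‖x (t + 1) - u‖ ≤ ‖(x t - η • g t) - u‖) :
    ∑ t ∈ Finset.Icc 1 T, ⟪g t, x t - u⟫ ≤
      ‖x 1 - u‖ ^ 2 / (2 * η) + (η / 2) * ∑ t ∈ Finset.Icc 1 T, ‖g t‖ ^ 2 := by
  have key : ∀ t ∈ Finset.Icc 1 T, ⟪g t, x t - u⟫ ≤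
      (‖x t - u‖ ^ 2 - ‖x (t + 1) - u‖ ^ 2) / (2 * η) + (η / 2) * ‖g t‖ ^ 2 := by
    intro t ht
    have h1 := hstep t ht
    have h2 : ‖x (t + 1) - u‖ ^ 2 ≤ ‖(x t - η • g t) - u‖ ^ 2 := by
      apply sq_le_sq' <;> nlinarith [norm_nonneg (x (t+1) - u), norm_nonneg ((x t - η • g t) - u)]
    have h3 : (x t - η • g t) - u = (x t - u) - η • g t := by abel
    rw [h3] at h2
    have h4 : ⟪x t - u, η • g t⟫ = η * ⟪g t, x t - u⟫ := by
      rw [real_inner_smul_right, real_inner_comm]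
    have h5 : ‖η • g t‖ ^ 2 = η ^ 2 * ‖g t‖ ^ 2 := by
      rw [norm_smul, mul_pow]; simp [abs_of_pos hη]
    have hexp : ‖(x t - u) - η • g t‖ ^ 2
        = ‖x t - u‖ ^ 2 - 2 * (η * ⟪g t, x t - u⟫) + η ^ 2 * ‖g t‖ ^ 2 := by
      rw [norm_sub_sq_real, h4, h5]
    rw [hexp] at h2
    rw [div_add' _ _ _ (by positivity), le_div_iff₀ (by positivity)]
    nlinarith
  calc ∑ t ∈ Finset.Icc 1 T, ⟪g t, x t - u⟫
      ≤ ∑ t ∈ Finset.Icc 1 T, ((‖x t - u‖ ^ 2 - ‖x (t + 1) - u‖ ^ 2) / (2 * η)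
          + (η / 2) * ‖g t‖ ^ 2) := Finset.sum_le_sum key
    _ = (∑ t ∈ Finset.Icc 1 T, (‖x t - u‖ ^ 2 - ‖x (t + 1) - u‖ ^ 2)) / (2 * η)
          + (η / 2) * ∑ t ∈ Finset.Icc 1 T, ‖g t‖ ^ 2 := by
        rw [Finset.sum_add_distrib, Finset.sum_div, Finset.mul_sum]
    _ ≤ ‖x 1 - u‖ ^ 2 / (2 * η) + (η / 2) * ∑ t ∈ Finset.Icc 1 T, ‖g t‖ ^ 2 := by
        gcongr
        have htel : ∑ t ∈ Finset.Icc 1 T, (‖x t - u‖ ^ 2 - ‖x (t + 1) - u‖ ^ 2)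
            = ‖x 1 - u‖ ^ 2 - ‖x (T + 1) - u‖ ^ 2 := by
          rw [← Finset.Ico_add_one_right_eq_Icc, Finset.sum_Ico_eq_sum_range]
          have := Finset.sum_range_sub' (fun i => ‖x (i + 1) - u‖ ^ 2) T
          rw [← this]; apply Finset.sum_congr rfl; intro i _; ring_nf
        rw [htel]
        nlinarith [sq_nonneg ‖x (T + 1) - u‖]
end

section
/- Let E be a real inner product space, let K ⊆ E be a nonempty set with diameter at most D > 0 (i.e., ‖v − w‖ ≤ D for all v, w ∈ K), let G > 0, T ≥ 1, and set η = D/(G·√T). Let f_1, …, f_T : E → ℝ, let x_1, …, x_{T+1} ∈ K, and let g_1, …, g_T ∈ E satisfy: (i) ‖g_t‖ ≤ G for each t; (ii) the subgradient inequality f_t(v) ≥ f_t(x_t) + ⟨g_t, v − x_t⟩ for every v ∈ K and each t; (iii) the projection property ‖x_{t+1} − z‖ ≤ ‖(x_t − η·g_t) − z‖ for every z ∈ K and each t. Then for every u ∈ K: ∑_{t=1}^T f_t(x_t) − ∑_{t=1}^T f_t(u) ≤ D·G·√T. -/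
/-! Expanding the square in the projection inequality at the comparator
`u` bounds the linearised regret `⟪g t, x t - u⟫` of round `t` by
`(‖x t - u‖² - ‖x (t+1) - u‖²) / (2η) + η ‖g t‖² / 2`. Summing, the distances telescope, so the
regret is at most `D² / (2η) + η T G² / 2`, and `η = D / (G √T)` balances the two terms. -/

open scoped RealInnerProductSpace
open Finset

section OnlineGradientDescent

variable {E : Type*} [NormedAddCommGroup E] [InnerProductSpace ℝ E]

theorem two_mul_inner_le_of_norm_sub_le {x y g u : E} {η : ℝ}
    (h : ‖y - u‖ ≤ ‖(x - η • g) - u‖) :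
    2 * η * ⟪g, x - u⟫ ≤ ‖x - u‖ ^ 2 - ‖y - u‖ ^ 2 + η ^ 2 * ‖g‖ ^ 2 := by
  have hexpand : ‖(x - η • g) - u‖ ^ 2 = ‖x - u‖ ^ 2 - 2 * η * ⟪g, x - u⟫ + η ^ 2 * ‖g‖ ^ 2 := by
    rw [sub_right_comm, norm_sub_sq_real, inner_smul_right, real_inner_comm, norm_smul, mul_pow,
      Real.norm_eq_abs, sq_abs]
    ring
  have hsq := pow_le_pow_left₀ (norm_nonneg _) h 2
  linarith

theorem two_mul_regret_le_of_projection_step (f : ℕ → E → ℝ) (x g : ℕ → E) (u : E) {η : ℝ}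
    (hη : 0 ≤ η) (T : ℕ)
    (hsub : ∀ t ∈ Icc 1 T, f t (x t) + ⟪g t, u - x t⟫ ≤ f t u)
    (hproj : ∀ t ∈ Icc 1 T, ‖x (t + 1) - u‖ ≤ ‖(x t - η • g t) - u‖) :
    2 * η * (∑ t ∈ Icc 1 T, f t (x t) - ∑ t ∈ Icc 1 T, f t u) ≤
      ‖x 1 - u‖ ^ 2 - ‖x (T + 1) - u‖ ^ 2 + η ^ 2 * ∑ t ∈ Icc 1 T, ‖g t‖ ^ 2 := by
  have hstep : ∀ t ∈ Icc 1 T, 2 * η * (f t (x t) - f t u) ≤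
      (‖x t - u‖ ^ 2 - ‖x (t + 1) - u‖ ^ 2) + η ^ 2 * ‖g t‖ ^ 2 := by
    intro t ht
    have hlin : f t (x t) - f t u ≤ ⟪g t, x t - u⟫ := by
      have := hsub t ht
      rw [← neg_sub, inner_neg_right] at this
      linarith
    calc 2 * η * (f t (x t) - f t u) ≤ 2 * η * ⟪g t, x t - u⟫ := by gcongr
      _ ≤ _ := by linarith [two_mul_inner_le_of_norm_sub_le (hproj t ht)]
  have htelescope : ∑ t ∈ Icc 1 T, (‖x t - u‖ ^ 2 - ‖x (t + 1) - u‖ ^ 2) =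
      ‖x 1 - u‖ ^ 2 - ‖x (T + 1) - u‖ ^ 2 := by
    have := sum_Ico_sub (fun t ↦ ‖x t - u‖ ^ 2) (Nat.le_add_left 1 T)
    rw [Ico_add_one_right_eq_Icc] at this
    rw [← neg_sub, ← this, ← sum_neg_distrib]
    simp only [neg_sub]
  calc 2 * η * (∑ t ∈ Icc 1 T, f t (x t) - ∑ t ∈ Icc 1 T, f t u)
      = ∑ t ∈ Icc 1 T, 2 * η * (f t (x t) - f t u) := by rw [← sum_sub_distrib, mul_sum]
    _ ≤ ∑ t ∈ Icc 1 T, ((‖x t - u‖ ^ 2 - ‖x (t + 1) - u‖ ^ 2) + η ^ 2 * ‖g t‖ ^ 2) :=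
      sum_le_sum hstep
    _ = _ := by rw [sum_add_distrib, htelescope, mul_sum]

theorem regret_le_of_projection_step (f : ℕ → E → ℝ) (x g : ℕ → E) (u : E) {D G η : ℝ}
    (hη : 0 < η) (T : ℕ) (hx₁ : ‖x 1 - u‖ ≤ D) (hg : ∀ t ∈ Icc 1 T, ‖g t‖ ≤ G)
    (hsub : ∀ t ∈ Icc 1 T, f t (x t) + ⟪g t, u - x t⟫ ≤ f t u)
    (hproj : ∀ t ∈ Icc 1 T, ‖x (t + 1) - u‖ ≤ ‖(x t - η • g t) - u‖) :
    ∑ t ∈ Icc 1 T, f t (x t) - ∑ t ∈ Icc 1 T, f t u ≤ D ^ 2 / (2 * η) + η * T * G ^ 2 / 2 := by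
  have hgsq : ∑ t ∈ Icc 1 T, ‖g t‖ ^ 2 ≤ T * G ^ 2 := by
    simpa using sum_le_sum fun t ht ↦ pow_le_pow_left₀ (norm_nonneg _) (hg t ht) 2
  have hmain := two_mul_regret_le_of_projection_step f x g u hη.le T hsub hproj
  have hx₁sq := pow_le_pow_left₀ (norm_nonneg _) hx₁ 2
  have hsplit : D ^ 2 / (2 * η) + η * T * G ^ 2 / 2 = (D ^ 2 + η ^ 2 * (T * G ^ 2)) / (2 * η) := by
    field_simp
  rw [hsplit, le_div_iff₀' (by positivity)]
  linarith [sq_nonneg ‖x (T + 1) - u‖, mul_le_mul_of_nonneg_left hgsq (sq_nonneg η)]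

end OnlineGradientDescent

theorem stmt_19_general {E : Type*} [NormedAddCommGroup E] [InnerProductSpace ℝ E]
    (K : Set E) (D G : ℝ) (hD : 0 < D) (hG : 0 < G)
    (hdiam : ∀ v ∈ K, ∀ w ∈ K, ‖v - w‖ ≤ D)
    (T : ℕ) (hT : 1 ≤ T) (η : ℝ) (hη : η = D / (G * Real.sqrt T))
    (f : ℕ → E → ℝ) (x g : ℕ → E)
    (hxK : ∀ t ∈ Finset.Icc 1 (T + 1), x t ∈ K)
    (hg : ∀ t ∈ Finset.Icc 1 T, ‖g t‖ ≤ G)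
    (hsub : ∀ t ∈ Finset.Icc 1 T, ∀ v ∈ K,
      f t (x t) + ⟪g t, v - x t⟫ ≤ f t v)
    (hproj : ∀ t ∈ Finset.Icc 1 T, ∀ z ∈ K,
      ‖x (t + 1) - z‖ ≤ ‖(x t - η • g t) - z‖) :
    ∀ u ∈ K,
      ∑ t ∈ Finset.Icc 1 T, f t (x t) - ∑ t ∈ Finset.Icc 1 T, f t u ≤
        D * G * Real.sqrt T := by
  intro u hu
  have hT₀ : (0 : ℝ) < T := by exact_mod_cast hT
  have hη₀ : 0 < η := by rw [hη]; positivity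
  have hx₁ : ‖x 1 - u‖ ≤ D := hdiam _ (hxK 1 (mem_Icc.mpr ⟨le_rfl, by omega⟩)) u hu
  calc _ ≤ D ^ 2 / (2 * η) + η * T * G ^ 2 / 2 :=
        regret_le_of_projection_step f x g u hη₀ T hx₁ hg (fun t ht ↦ hsub t ht u hu)
          (fun t ht ↦ hproj t ht u hu)
    _ = D * G * Real.sqrt T := by
      rw [hη]
      field_simp
      rw [Real.sq_sqrt hT₀.le]
      ring

theorem stmt_19 {E : Type*} [NormedAddCommGroup E] [InnerProductSpace ℝ E]
    (K : Set E) (hK : K.Nonempty) (D G : ℝ) (hD : 0 < D) (hG : 0 < G)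
    (hdiam : ∀ v ∈ K, ∀ w ∈ K, ‖v - w‖ ≤ D)
    (T : ℕ) (hT : 1 ≤ T) (η : ℝ) (hη : η = D / (G * Real.sqrt T))
    (f : ℕ → E → ℝ) (x g : ℕ → E)
    (hxK : ∀ t ∈ Finset.Icc 1 (T + 1), x t ∈ K)
    (hg : ∀ t ∈ Finset.Icc 1 T, ‖g t‖ ≤ G)
    (hsub : ∀ t ∈ Finset.Icc 1 T, ∀ v ∈ K,
      f t (x t) + ⟪g t, v - x t⟫ ≤ f t v)
    (hproj : ∀ t ∈ Finset.Icc 1 T, ∀ z ∈ K,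
      ‖x (t + 1) - z‖ ≤ ‖(x t - η • g t) - z‖) :
    ∀ u ∈ K,
      ∑ t ∈ Finset.Icc 1 T, f t (x t) - ∑ t ∈ Finset.Icc 1 T, f t u ≤
        D * G * Real.sqrt T :=
  stmt_19_general K D G hD hG hdiam T hT η hη f x g hxK hg hsub hproj
end
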